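/- arXiv:1503.09092 — 11 statements merged into one kernel-verified Lean document; each statement's English description precedes it below -/
import Mathlib

section
/- Let r ≤ m be nonnegative integers, let u_1, …, u_t ∈ 𝔽₂^m be points such that the degree-r evaluation vectors u_1^r, …, u_t^r are linearly independent over 𝔽₂, and let v = (v_1,…,v_m) ∈ 𝔽₂^m. Suppose there exists a multilinear polynomial f ∈ 𝔽₂[x_1,…,x_m] of total degree at most r such that: (1) ∑_{i=1}^t f(u_i) = f(v) = 1; (2) ∑_{i=1}^t (f·M)(u_i) = M(v) for every multilinear monomial M of degree at most r; and (3) ∑_{i=1}^t (f·M·(x_ℓ + v_ℓ + 1))(u_i) = M(v) for every ℓ ∈ [m] and every multilinear monomial M of degree at most r (all sums in 𝔽₂). Then v = u_i for some i ∈ [t]. -/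
open MvPolynomial

/-- The degree-`r` evaluation vector of a point `u ∈ 𝔽₂^m`. -/
def evalVec (m r : ℕ) (u : Fin m → ZMod 2) :
    {S : Finset (Fin m) // S.card ≤ r} → ZMod 2 :=
  fun S => ∏ i ∈ S.1, u i

/-- A polynomial is multilinear if every variable occurs with individual degree at most 1. -/
def IsMultilinear {m : ℕ} (f : MvPolynomial (Fin m) (ZMod 2)) : Prop :=
  ∀ d ∈ f.support, ∀ i, d i ≤ 1

theorem stmt1 (m r t : ℕ) (hrm : r ≤ m)
    (u : Fin t → (Fin m → ZMod 2))
    (hind : LinearIndependent (ZMod 2) (fun j => evalVec m r (u j)))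
    (v : Fin m → ZMod 2)
    (f : MvPolynomial (Fin m) (ZMod 2))
    (hml : IsMultilinear f) (hdeg : f.totalDegree ≤ r)
    (h1 : (∑ i : Fin t, eval (u i) f) = 1 ∧ eval v f = 1)
    (h2 : ∀ S : Finset (Fin m), S.card ≤ r →
      (∑ i : Fin t, eval (u i) (f * ∏ l ∈ S, X l)) = ∏ l ∈ S, v l)
    (h3 : ∀ ℓ : Fin m, ∀ S : Finset (Fin m), S.card ≤ r →
      (∑ i : Fin t, eval (u i) (f * (∏ l ∈ S, X l) * (X ℓ + C (v ℓ) + 1)))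
        = ∏ l ∈ S, v l) :
    ∃ i : Fin t, v = u i := by
  have htwo : (2 : ZMod 2) = 0 := by decide
  have hone : ∀ x : ZMod 2, x ≠ 0 → x = 1 := by decide
  -- there is some i with f(u i) = 1
  have hne : ∃ i : Fin t, eval (u i) f ≠ 0 := by
    by_contra h
    push_neg at h
    have : (∑ i : Fin t, eval (u i) f) = 0 := Finset.sum_eq_zero fun i _ => h i
    rw [this] at h1
    exact absurd h1.1 (by decide)
  obtain ⟨i, hi⟩ := hne
  have hfi : eval (u i) f = 1 := hone _ hi
  -- key: f(u j) * (u j ℓ + v ℓ) = 0 for all j, ℓ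
  have key : ∀ ℓ : Fin m, ∀ j : Fin t, eval (u j) f * (u j ℓ + v ℓ) = 0 := by
    intro ℓ
    refine Fintype.linearIndependent_iff.mp hind
      (fun j => eval (u j) f * (u j ℓ + v ℓ)) ?_
    funext S
    have e2 := h2 S.1 S.2
    have e3 := h3 ℓ S.1 S.2
    simp only [map_mul, map_add, map_one, eval_X, eval_C, map_prod] at e2 e3
    have hsum : ∑ j : Fin t,
        (eval (u j) f * (u j ℓ + v ℓ)) * ∏ l ∈ S.1, u j l
        = (∑ j : Fin t, eval (u j) f * (∏ l ∈ S.1, u j l) * (u j ℓ + v ℓ + 1))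
          + ∑ j : Fin t, eval (u j) f * ∏ l ∈ S.1, u j l := by
      rw [← Finset.sum_add_distrib]
      refine Finset.sum_congr rfl fun j _ => ?_
      linear_combination (-(eval (u j) f * ∏ l ∈ S.1, u j l)) * htwo
    have : ∑ j : Fin t,
        (eval (u j) f * (u j ℓ + v ℓ)) * ∏ l ∈ S.1, u j l = 0 := by
      rw [hsum, e2, e3]
      linear_combination (∏ l ∈ S.1, v l) * htwo
    simpa [Finset.sum_apply, evalVec, smul_eq_mul, Pi.zero_apply,
      Finset.sum_fn] using this
  refine ⟨i, ?_⟩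
  funext ℓ
  have hk := key ℓ i
  rw [hfi, one_mul] at hk
  linear_combination hk - (u i ℓ) * htwo
end

section
/- Let r ≤ m be nonnegative integers, let u_1, …, u_t ∈ 𝔽₂^m, let v = (v_1,…,v_m) ∈ 𝔽₂^m, let ℓ ∈ [m], and let f ∈ 𝔽₂[x_1,…,x_m] be a multilinear polynomial of total degree at most r satisfying ∑_{i=1}^t (f·M·(x_ℓ + v_ℓ + 1))(u_i) = M(v) for every multilinear monomial M of degree at most r. Let J_ℓ = { j ∈ [t] : f(u_j) = 1 and (u_j)_ℓ = v_ℓ }. Then ∑_{i ∈ J_ℓ} u_i^r = v^r (as vectors over 𝔽₂ indexed by multilinear monomials of degree at most r). -/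
open MvPolynomial

theorem stmt3 (m r t : ℕ) (hrm : r ≤ m)
    (u : Fin t → (Fin m → ZMod 2))
    (v : Fin m → ZMod 2) (ℓ : Fin m)
    (f : MvPolynomial (Fin m) (ZMod 2))
    (hml : IsMultilinear f) (hdeg : f.totalDegree ≤ r)
    (h3 : ∀ S : Finset (Fin m), S.card ≤ r →
      (∑ i : Fin t, eval (u i) (f * (∏ l ∈ S, X l) * (X ℓ + C (v ℓ) + 1)))
        = ∏ l ∈ S, v l) :
    (∑ i ∈ Finset.univ.filter (fun j : Fin t => eval (u j) f = 1 ∧ u j ℓ = v ℓ),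
      evalVec m r (u i)) = evalVec m r v := by
  funext S
  have h := h3 S.1 S.2
  simp only [eval_mul, eval_prod, eval_X, eval_add, eval_C, map_one] at h
  simp only [Finset.sum_apply, evalVec]
  rw [← h, Finset.sum_filter]
  refine Finset.sum_congr rfl fun i _ => ?_
  have key : ∀ a b c : ZMod 2,
      (if a = 1 ∧ b = c then (1 : ZMod 2) else 0) = a * (b + c + 1) := by decide
  rw [show eval (u i) f * (∏ l ∈ S.1, u i l) * (u i ℓ + v ℓ + 1)
      = (eval (u i) f * (u i ℓ + v ℓ + 1)) * ∏ l ∈ S.1, u i l from by ring,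
    ← key, ite_mul, one_mul, zero_mul]
end

section
/- Let r ≤ m be nonnegative integers and let u_1, …, u_t ∈ 𝔽₂^m be distinct points such that the degree-r evaluation vectors u_1^r, …, u_t^r are linearly independent over 𝔽₂. Then for every k ∈ [t], setting v = u_k, there exists a multilinear polynomial f ∈ 𝔽₂[x_1,…,x_m] of total degree at most r satisfying: (1) ∑_{i=1}^t f(u_i) = f(v) = 1; (2) ∑_{i=1}^t (f·M)(u_i) = M(v) for every multilinear monomial M of degree at most r; and (3) ∑_{i=1}^t (f·M·(x_ℓ + v_ℓ + 1))(u_i) = M(v) for every ℓ ∈ [m] and every multilinear monomial M of degree at most r. -/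
open MvPolynomial

/-! Linear independence of the vectors `u_j^r` yields coefficients `a_S` (`|S| ≤ r`) with
`∑_S a_S ∏_{i ∈ S} u_j i = [j = k]`, i.e. a multilinear `f = ∑_S a_S x^S` of degree `≤ r`
with `f(u_j) = [j = k]`. Hence `∑_j (f g)(u_j) = g(v)` for every polynomial `g`, and the three
identities are the cases `g = 1`, `g = M` and `g = M (x_ℓ + v_ℓ + 1)`, the last because
`v_ℓ + v_ℓ + 1 = 1` over `𝔽₂`. -/

theorem LinearIndependent.exists_dual_apply_eq_ite {K V ι : Type*} [DivisionRing K]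
    [AddCommGroup V] [Module K V] [DecidableEq ι] {w : ι → V} (hw : LinearIndependent K w)
    (k : ι) : ∃ g : Module.Dual K V, ∀ j, g (w j) = if j = k then 1 else 0 := by
  obtain ⟨g, hg⟩ := LinearMap.exists_extend ((Finsupp.lapply k).comp hw.repr)
  refine ⟨g, fun j => ?_⟩
  have := LinearMap.congr_fun hg ⟨w j, Submodule.subset_span ⟨j, rfl⟩⟩
  rw [LinearMap.comp_apply, LinearMap.comp_apply, hw.repr_eq_single j _ rfl] at this
  simpa [Finsupp.single_apply, eq_comm] using this

theorem LinearIndependent.exists_sum_mul_eq_ite {K ι κ : Type*} [Field K] [Fintype κ]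
    [DecidableEq ι] {w : ι → κ → K} (hw : LinearIndependent K w) (k : ι) :
    ∃ a : κ → K, ∀ j, ∑ S, a S * w j S = if j = k then 1 else 0 := by
  classical
  obtain ⟨g, hg⟩ := hw.exists_dual_apply_eq_ite k
  refine ⟨fun S => g (Pi.single S 1), fun j => ?_⟩
  rw [← hg j, LinearMap.pi_apply_eq_sum_univ g (w j)]
  refine Finset.sum_congr rfl fun S _ => ?_
  have : (fun T => if S = T then (1 : K) else 0) = Pi.single S 1 := by
    ext T
    simp [Pi.single_apply, eq_comm]
  rw [mul_comm, smul_eq_mul, this]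

namespace MvPolynomial

variable {σ R : Type*} [CommSemiring R]

theorem degreeOf_prod_X_le_one (S : Finset σ) (i : σ) :
    degreeOf i (∏ j ∈ S, X j : MvPolynomial σ R) ≤ 1 := by
  classical
  cases subsingleton_or_nontrivial R
  · simp [Subsingleton.elim (∏ j ∈ S, X j : MvPolynomial σ R) 0]
  calc degreeOf i (∏ j ∈ S, X j : MvPolynomial σ R)
      ≤ ∑ j ∈ S, degreeOf i (X j : MvPolynomial σ R) := degreeOf_prod_le i S _
    _ = if i ∈ S then 1 else 0 := by simp [degreeOf_X]
    _ ≤ 1 := by split_ifs <;> simp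

theorem totalDegree_C_mul_prod_X_le (c : R) (S : Finset σ) :
    totalDegree (C c * ∏ j ∈ S, X j : MvPolynomial σ R) ≤ S.card := by
  cases subsingleton_or_nontrivial R
  · simp [Subsingleton.elim (C c * ∏ j ∈ S, X j : MvPolynomial σ R) 0]
  refine (totalDegree_mul _ _).trans ?_
  rw [totalDegree_C, zero_add, Finset.card_eq_sum_ones]
  exact (totalDegree_finsetProd _ _).trans (Finset.sum_le_sum fun j _ => (totalDegree_X j).le)

theorem sum_eval_mul_of_eval_eq_ite {ι : Type*} [Fintype ι] [DecidableEq ι] {u : ι → σ → R}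
    {f : MvPolynomial σ R} {k : ι} (hf : ∀ j, eval (u j) f = if j = k then 1 else 0)
    (g : MvPolynomial σ R) : ∑ i, eval (u i) (f * g) = eval (u k) g := by
  simp [hf]

end MvPolynomial

theorem isMultilinear_iff_degreeOf_le_one {m : ℕ} {f : MvPolynomial (Fin m) (ZMod 2)} :
    IsMultilinear f ↔ ∀ i, degreeOf i f ≤ 1 := by
  simp only [IsMultilinear, degreeOf_le_iff]
  exact ⟨fun h i d hd => h d hd i, fun h d hd i => h i d hd⟩

theorem isMultilinear_sum_C_mul_prod_X {m : ℕ} {ι : Type*} (J : Finset ι)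
    (a : ι → ZMod 2) (s : ι → Finset (Fin m)) :
    IsMultilinear (∑ j ∈ J, C (a j) * ∏ i ∈ s j, X i) := by
  refine isMultilinear_iff_degreeOf_le_one.2 fun i => (degreeOf_sum_le i J _).trans ?_
  exact Finset.sup_le fun j _ => (degreeOf_C_mul_le _ i _).trans (degreeOf_prod_X_le_one _ i)

theorem stmt4_general (m r t : ℕ)
    (u : Fin t → (Fin m → ZMod 2))
    (hind : LinearIndependent (ZMod 2) (fun j => evalVec m r (u j))) :
    ∀ k : Fin t, ∃ f : MvPolynomial (Fin m) (ZMod 2),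
      IsMultilinear f ∧ f.totalDegree ≤ r ∧
      ((∑ i : Fin t, eval (u i) f) = 1 ∧ eval (u k) f = 1) ∧
      (∀ S : Finset (Fin m), S.card ≤ r →
        (∑ i : Fin t, eval (u i) (f * ∏ l ∈ S, X l)) = ∏ l ∈ S, u k l) ∧
      (∀ ℓ : Fin m, ∀ S : Finset (Fin m), S.card ≤ r →
        (∑ i : Fin t, eval (u i) (f * (∏ l ∈ S, X l) * (X ℓ + C (u k ℓ) + 1)))
          = ∏ l ∈ S, u k l) := by
  intro k
  obtain ⟨a, ha⟩ := hind.exists_sum_mul_eq_ite k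
  set f : MvPolynomial (Fin m) (ZMod 2) :=
    ∑ S : {S : Finset (Fin m) // S.card ≤ r}, C (a S) * ∏ i ∈ S.1, X i
  have hf : ∀ j, eval (u j) f = if j = k then 1 else 0 := fun j => by
    rw [← ha j]
    simp [f, evalVec]
  refine ⟨f, isMultilinear_sum_C_mul_prod_X _ _ _, ?_, ⟨?_, by simp [hf]⟩, fun S _ => ?_,
    fun ℓ S _ => ?_⟩
  · exact (totalDegree_finsetSum _ _).trans
      (Finset.sup_le fun S _ => (totalDegree_C_mul_prod_X_le _ _).trans S.2)
  · simpa using sum_eval_mul_of_eval_eq_ite hf 1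
  · rw [sum_eval_mul_of_eval_eq_ite hf]
    simp
  · rw [mul_assoc, sum_eval_mul_of_eval_eq_ite hf]
    simp [CharTwo.add_self_eq_zero]

theorem stmt4 (m r t : ℕ) (hrm : r ≤ m)
    (u : Fin t → (Fin m → ZMod 2)) (hinj : Function.Injective u)
    (hind : LinearIndependent (ZMod 2) (fun j => evalVec m r (u j))) :
    ∀ k : Fin t, ∃ f : MvPolynomial (Fin m) (ZMod 2),
      IsMultilinear f ∧ f.totalDegree ≤ r ∧
      ((∑ i : Fin t, eval (u i) f) = 1 ∧ eval (u k) f = 1) ∧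
      (∀ S : Finset (Fin m), S.card ≤ r →
        (∑ i : Fin t, eval (u i) (f * ∏ l ∈ S, X l)) = ∏ l ∈ S, u k l) ∧
      (∀ ℓ : Fin m, ∀ S : Finset (Fin m), S.card ≤ r →
        (∑ i : Fin t, eval (u i) (f * (∏ l ∈ S, X l) * (X ℓ + C (u k ℓ) + 1)))
          = ∏ l ∈ S, u k l) :=
  stmt4_general m r t u hind
end

section
/- Let r ≤ m be nonnegative integers and let u_1, …, u_t ∈ 𝔽₂^m be distinct points such that the degree-r evaluation vectors u_1^r, …, u_t^r are linearly independent over 𝔽₂. Then for every v ∈ 𝔽₂^m, the following are equivalent: (a) v ∈ {u_1,…,u_t}; (b) there exists a multilinear polynomial f ∈ 𝔽₂[x_1,…,x_m] of total degree at most r such that ∑_{i=1}^t f(u_i) = f(v) = 1, ∑_{i=1}^t (f·M)(u_i) = M(v) for every multilinear monomial M of degree at most r, and ∑_{i=1}^t (f·M·(x_ℓ + v_ℓ + 1))(u_i) = M(v) for every ℓ ∈ [m] and every multilinear monomial M of degree at most r. Consequently, the set {u_1,…,u_t} is determined by the degree-(2r+1) syndrome of (u_1,…,u_t), since every sum appearing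 in (b) is a sum of evaluations of a polynomial of degree at most 2r+1 at u_1,…,u_t. -/
open MvPolynomial

lemma exists_dual {K V : Type*} [Field K] [AddCommGroup V] [Module K V]
    {t : ℕ} (w : Fin t → V) (h : LinearIndependent K w) (j : Fin t) :
    ∃ φ : V →ₗ[K] K, ∀ i, φ (w i) = if i = j then 1 else 0 := by
  classical
  let L : (Fin t → K) →ₗ[K] V :=
    { toFun := fun c => ∑ i, c i • w i
      map_add' := by intro a b; simp [add_smul, Finset.sum_add_distrib]
      map_smul' := by intro a b; simp [Finset.smul_sum, smul_smul] }
  have hLinj : Function.Injective L := by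
    rw [← LinearMap.ker_eq_bot, LinearMap.ker_eq_bot']
    intro c hc
    have := Fintype.linearIndependent_iff.mp h c hc
    funext i; exact this i
  obtain ⟨φ, hφ⟩ := LinearMap.dualMap_surjective_of_injective hLinj (LinearMap.proj j)
  refine ⟨φ, fun i => ?_⟩
  have hw : L (Pi.single i 1) = w i := by
    simp [L, Pi.single_apply, ite_smul]
  have h2 : φ (L (Pi.single i 1)) = (LinearMap.proj j : (Fin t → K) →ₗ[K] K) (Pi.single i 1) := by
    rw [← hφ]; rfl
  rw [hw] at h2
  rw [h2]
  simp [Pi.single_apply, eq_comm]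

lemma mono_eq (m : ℕ) (S : Finset (Fin m)) :
    (monomial (∑ l ∈ S, Finsupp.single l 1) (1 : ZMod 2)) = ∏ l ∈ S, X l := by
  rw [monomial_sum_one]; rfl

noncomputable def polyOf (m r : ℕ) (c : {S : Finset (Fin m) // S.card ≤ r} → ZMod 2) :
    MvPolynomial (Fin m) (ZMod 2) :=
  ∑ S : {S : Finset (Fin m) // S.card ≤ r}, C (c S) * ∏ l ∈ S.1, X l

lemma polyOf_eval (m r : ℕ) (c : {S : Finset (Fin m) // S.card ≤ r} → ZMod 2)
    (u : Fin m → ZMod 2) :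
    eval u (polyOf m r c) = ∑ S : {S : Finset (Fin m) // S.card ≤ r}, c S * ∏ l ∈ S.1, u l := by
  simp [polyOf]

lemma polyOf_totalDegree (m r : ℕ) (c : {S : Finset (Fin m) // S.card ≤ r} → ZMod 2) :
    (polyOf m r c).totalDegree ≤ r := by
  refine (totalDegree_finset_sum _ _).trans (Finset.sup_le fun S _ => ?_)
  refine (totalDegree_mul _ _).trans ?_
  simp only [totalDegree_C, zero_add]
  refine (totalDegree_finset_prod _ _).trans ?_
  calc ∑ l ∈ S.1, (X l : MvPolynomial (Fin m) (ZMod 2)).totalDegree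
      = S.1.card := by simp [totalDegree_X]
    _ ≤ r := S.2

lemma polyOf_multilinear (m r : ℕ) (c : {S : Finset (Fin m) // S.card ≤ r} → ZMod 2) :
    IsMultilinear (polyOf m r c) := by
  classical
  intro d hd i
  have : d ∈ Finset.univ.biUnion
      (fun S : {S : Finset (Fin m) // S.card ≤ r} =>
        (C (c S) * ∏ l ∈ S.1, X l : MvPolynomial (Fin m) (ZMod 2)).support) :=
    support_sum hd
  obtain ⟨S, -, hS⟩ := Finset.mem_biUnion.mp this
  have heq : (C (c S) * ∏ l ∈ S.1, X l : MvPolynomial (Fin m) (ZMod 2))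
      = monomial (∑ l ∈ S.1, Finsupp.single l 1) (c S) := by
    rw [← mono_eq, C_mul_monomial, mul_one]
  rw [heq] at hS
  have := support_monomial_subset hS
  simp only [Finset.mem_singleton] at this
  subst this
  simp [Finsupp.finset_sum_apply, Finsupp.single_apply]
  split <;> simp_all [Finset.sum_ite_eq]


lemma zmod2_mul_self (x : ZMod 2) : x * x = x := by revert x; decide

lemma zmod2_pow (x : ZMod 2) {k : ℕ} (hk : k ≠ 0) : x ^ k = x := by
  obtain ⟨k, rfl⟩ := Nat.exists_eq_succ_of_ne_zero hk
  induction k with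
  | zero => simp
  | succ n ih => rw [pow_succ, ih n.succ_ne_zero, zmod2_mul_self]

lemma eval_zmod2 {m : ℕ} (g : MvPolynomial (Fin m) (ZMod 2)) (x : Fin m → ZMod 2) :
    eval x g = ∑ d ∈ g.support, coeff d g * ∏ l ∈ d.support, x l := by
  rw [eval_eq]
  refine Finset.sum_congr rfl fun d hd => ?_
  congr 1
  refine Finset.prod_congr rfl fun l hl => ?_
  exact zmod2_pow _ (Finsupp.mem_support_iff.mp hl)

lemma card_support_le_totalDegree {m : ℕ} (g : MvPolynomial (Fin m) (ZMod 2))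
    {d : Fin m →₀ ℕ} (hd : d ∈ g.support) : d.support.card ≤ g.totalDegree := by
  refine le_trans ?_ (le_totalDegree hd)
  calc d.support.card = ∑ l ∈ d.support, 1 := by simp
    _ ≤ ∑ l ∈ d.support, d l := Finset.sum_le_sum fun l hl =>
        Nat.one_le_iff_ne_zero.mpr (Finsupp.mem_support_iff.mp hl)
    _ = d.sum fun _ n => n := rfl

-- syndrome transfer
lemma syndrome_transfer {m t t' : ℕ} (u : Fin t → (Fin m → ZMod 2))
    (u' : Fin t' → (Fin m → ZMod 2)) (D : ℕ)
    (hsyn : ∀ S : Finset (Fin m), S.card ≤ D →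
      (∑ i : Fin t, ∏ l ∈ S, u i l) = ∑ i : Fin t', ∏ l ∈ S, u' i l)
    (g : MvPolynomial (Fin m) (ZMod 2)) (hg : g.totalDegree ≤ D) :
    (∑ i : Fin t, eval (u i) g) = ∑ i : Fin t', eval (u' i) g := by
  simp only [eval_zmod2 g]
  rw [Finset.sum_comm, Finset.sum_comm (s := Finset.univ)]
  refine Finset.sum_congr rfl fun d hd => ?_
  rw [← Finset.mul_sum, ← Finset.mul_sum,
    hsyn d.support ((card_support_le_totalDegree g hd).trans hg)]

lemma zmod2_add_self (a : ZMod 2) : a + a = 0 := by revert a; decide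

lemma zmod2_eq_of_add_eq_zero {a b : ZMod 2} (h : a + b = 0) : a = b := by
  revert a b; decide

lemma main_iff (m r t : ℕ)
    (u : Fin t → (Fin m → ZMod 2))
    (hind : LinearIndependent (ZMod 2) (fun j => evalVec m r (u j)))
    (v : Fin m → ZMod 2) :
    (∃ i : Fin t, v = u i) ↔
      (∃ f : MvPolynomial (Fin m) (ZMod 2), IsMultilinear f ∧ f.totalDegree ≤ r ∧
        ((∑ i : Fin t, eval (u i) f) = 1 ∧ eval v f = 1) ∧
        (∀ S : Finset (Fin m), S.card ≤ r →
          (∑ i : Fin t, eval (u i) (f * ∏ l ∈ S, X l)) = ∏ l ∈ S, v l) ∧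
        (∀ ℓ : Fin m, ∀ S : Finset (Fin m), S.card ≤ r →
          (∑ i : Fin t, eval (u i) (f * (∏ l ∈ S, X l) * (X ℓ + C (v ℓ) + 1)))
            = ∏ l ∈ S, v l)) := by
  classical
  constructor
  · rintro ⟨j, rfl⟩
    obtain ⟨φ, hφ⟩ := exists_dual (fun j => evalVec m r (u j)) hind j
    set c : {S : Finset (Fin m) // S.card ≤ r} → ZMod 2 := fun S => φ (Pi.single S 1) with hc
    have heval : ∀ x : Fin m → ZMod 2, eval x (polyOf m r c) = φ (evalVec m r x) := by
      intro x
      rw [polyOf_eval]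
      have hstep : ∀ S : {S : Finset (Fin m) // S.card ≤ r},
          c S * ∏ l ∈ S.1, x l = φ ((evalVec m r x S) • Pi.single S (1 : ZMod 2)) := by
        intro S
        rw [map_smul, smul_eq_mul, hc, mul_comm]
        rfl
      rw [Finset.sum_congr rfl fun S _ => hstep S, ← map_sum]
      congr 1
      funext T
      simp [Finset.sum_apply, Pi.single_apply, evalVec]
    have E : ∀ i, eval (u i) (polyOf m r c) = if i = j then 1 else 0 := by
      intro i; rw [heval]; exact hφ i
    refine ⟨polyOf m r c, polyOf_multilinear m r c, polyOf_totalDegree m r c, ⟨?_, ?_⟩, ?_, ?_⟩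
    · simp [E]
    · rw [E]; simp
    · intro S hSc
      simp only [map_mul, map_prod, eval_X, E, ite_mul, one_mul, zero_mul]
      simp
    · intro ℓ S hSc
      simp only [map_mul, map_add, map_one, map_prod, eval_X, eval_C, E, ite_mul, one_mul,
        zero_mul]
      simp [zmod2_add_self]
  · rintro ⟨f, -, -, ⟨hsum, -⟩, hS, hℓ⟩
    -- coefficients vanish
    have key : ∀ i : Fin t, ∀ ℓ : Fin m, eval (u i) f * (u i ℓ + v ℓ) = 0 := by
      intro i ℓ
      have hzero : ∀ S : Finset (Fin m), S.card ≤ r →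
          (∑ k : Fin t, (eval (u k) f * (u k ℓ + v ℓ)) * ∏ l ∈ S, u k l) = 0 := by
        intro S hSc
        have h1 := hS S hSc
        have h2 := hℓ ℓ S hSc
        simp only [map_mul, map_add, map_one, eval_X, eval_C, map_prod] at h1 h2
        have expand : ∀ k : Fin t,
            eval (u k) f * (∏ l ∈ S, u k l) * (u k ℓ + v ℓ + 1)
            = (eval (u k) f * (u k ℓ + v ℓ)) * ∏ l ∈ S, u k l
              + eval (u k) f * ∏ l ∈ S, u k l := by intro k; ring
        rw [Finset.sum_congr rfl (fun k _ => expand k), Finset.sum_add_distrib, h1] at h2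
        have := congrArg (fun z => z + ∏ l ∈ S, v l) h2
        simpa [add_assoc, zmod2_add_self] using this
      have := Fintype.linearIndependent_iff.mp hind
        (fun k => eval (u k) f * (u k ℓ + v ℓ)) ?_ i
      · exact this
      · funext S
        simpa [evalVec, Finset.sum_apply] using hzero S.1 S.2
    have hex : ∃ i : Fin t, eval (u i) f ≠ 0 := by
      by_contra h
      push_neg at h
      rw [Finset.sum_congr rfl fun i _ => h i] at hsum
      simp at hsum
    obtain ⟨i, hi⟩ := hex
    refine ⟨i, funext fun ℓ => ?_⟩
    have := key i ℓ
    rcases mul_eq_zero.mp this with h | h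
    · exact absurd h hi
    · exact (zmod2_eq_of_add_eq_zero h).symm


lemma prodX_deg {m : ℕ} (S : Finset (Fin m)) :
    (∏ l ∈ S, X l : MvPolynomial (Fin m) (ZMod 2)).totalDegree ≤ S.card := by
  refine (totalDegree_finset_prod _ _).trans ?_
  simp [totalDegree_X]

lemma lin_deg {m : ℕ} (ℓ : Fin m) (a : ZMod 2) :
    (X ℓ + C a + 1 : MvPolynomial (Fin m) (ZMod 2)).totalDegree ≤ 1 := by
  refine (totalDegree_add _ _).trans (max_le ?_ ?_)
  · refine (totalDegree_add _ _).trans (max_le ?_ ?_)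
    · simp [totalDegree_X]
    · simp [totalDegree_C]
  · simp [totalDegree_one]

lemma rhs_mono {m r t t' : ℕ} (u : Fin t → (Fin m → ZMod 2)) (u' : Fin t' → (Fin m → ZMod 2))
    (hsyn : ∀ S : Finset (Fin m), S.card ≤ 2 * r + 1 →
      (∑ i : Fin t, ∏ l ∈ S, u i l) = ∑ i : Fin t', ∏ l ∈ S, u' i l)
    (v : Fin m → ZMod 2)
    (h : ∃ f : MvPolynomial (Fin m) (ZMod 2), IsMultilinear f ∧ f.totalDegree ≤ r ∧
        ((∑ i : Fin t, eval (u i) f) = 1 ∧ eval v f = 1) ∧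
        (∀ S : Finset (Fin m), S.card ≤ r →
          (∑ i : Fin t, eval (u i) (f * ∏ l ∈ S, X l)) = ∏ l ∈ S, v l) ∧
        (∀ ℓ : Fin m, ∀ S : Finset (Fin m), S.card ≤ r →
          (∑ i : Fin t, eval (u i) (f * (∏ l ∈ S, X l) * (X ℓ + C (v ℓ) + 1)))
            = ∏ l ∈ S, v l)) :
    (∃ f : MvPolynomial (Fin m) (ZMod 2), IsMultilinear f ∧ f.totalDegree ≤ r ∧
        ((∑ i : Fin t', eval (u' i) f) = 1 ∧ eval v f = 1) ∧
        (∀ S : Finset (Fin m), S.card ≤ r →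
          (∑ i : Fin t', eval (u' i) (f * ∏ l ∈ S, X l)) = ∏ l ∈ S, v l) ∧
        (∀ ℓ : Fin m, ∀ S : Finset (Fin m), S.card ≤ r →
          (∑ i : Fin t', eval (u' i) (f * (∏ l ∈ S, X l) * (X ℓ + C (v ℓ) + 1)))
            = ∏ l ∈ S, v l)) := by
  obtain ⟨f, hml, hdeg, ⟨h1, h2⟩, h3, h4⟩ := h
  refine ⟨f, hml, hdeg, ⟨?_, h2⟩, ?_, ?_⟩
  · rw [← syndrome_transfer u u' (2 * r + 1) hsyn f (by omega)]
    exact h1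
  · intro S hSc
    rw [← syndrome_transfer u u' (2 * r + 1) hsyn (f * ∏ l ∈ S, X l) ?_]
    · exact h3 S hSc
    · refine (totalDegree_mul _ _).trans ?_
      have := prodX_deg S
      omega
  · intro ℓ S hSc
    rw [← syndrome_transfer u u' (2 * r + 1) hsyn
      (f * (∏ l ∈ S, X l) * (X ℓ + C (v ℓ) + 1)) ?_]
    · exact h4 ℓ S hSc
    · refine (totalDegree_mul _ _).trans ?_
      have h5 : (f * ∏ l ∈ S, X l).totalDegree ≤ r + S.card :=
        (totalDegree_mul f (∏ l ∈ S, X l)).trans (add_le_add hdeg (prodX_deg S))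
      have h6 := lin_deg ℓ (v ℓ)
      omega

theorem stmt5 (m r t : ℕ) (hrm : r ≤ m)
    (u : Fin t → (Fin m → ZMod 2)) (hinj : Function.Injective u)
    (hind : LinearIndependent (ZMod 2) (fun j => evalVec m r (u j))) :
    -- (a) ↔ (b)
    (∀ v : Fin m → ZMod 2,
      (∃ i : Fin t, v = u i) ↔
      (∃ f : MvPolynomial (Fin m) (ZMod 2), IsMultilinear f ∧ f.totalDegree ≤ r ∧
        ((∑ i : Fin t, eval (u i) f) = 1 ∧ eval v f = 1) ∧
        (∀ S : Finset (Fin m), S.card ≤ r →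
          (∑ i : Fin t, eval (u i) (f * ∏ l ∈ S, X l)) = ∏ l ∈ S, v l) ∧
        (∀ ℓ : Fin m, ∀ S : Finset (Fin m), S.card ≤ r →
          (∑ i : Fin t, eval (u i) (f * (∏ l ∈ S, X l) * (X ℓ + C (v ℓ) + 1)))
            = ∏ l ∈ S, v l)))
    ∧
    -- consequently, the set {u_1, …, u_t} is determined by the degree-(2r+1) syndrome
    (∀ t' : ℕ, ∀ u' : Fin t' → (Fin m → ZMod 2), Function.Injective u' →
      LinearIndependent (ZMod 2) (fun j => evalVec m r (u' j)) →
      (∀ S : Finset (Fin m), S.card ≤ 2 * r + 1 →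
        (∑ i : Fin t, ∏ l ∈ S, u i l) = ∑ i : Fin t', ∏ l ∈ S, u' i l) →
      Set.range u = Set.range u') := by
  refine ⟨fun v => main_iff m r t u hind v, ?_⟩
  intro t' u' hinj' hind' hsyn
  have hsyn' : ∀ S : Finset (Fin m), S.card ≤ 2 * r + 1 →
      (∑ i : Fin t', ∏ l ∈ S, u' i l) = ∑ i : Fin t, ∏ l ∈ S, u i l :=
    fun S hS => (hsyn S hS).symm
  ext v
  simp only [Set.mem_range]
  constructor
  · rintro ⟨i, rfl⟩
    have h1 := (main_iff m r t u hind (u i)).mp ⟨i, rfl⟩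
    obtain ⟨j, hj⟩ := (main_iff m r t' u' hind' (u i)).mpr (rhs_mono u u' hsyn _ h1)
    exact ⟨j, hj.symm⟩
  · rintro ⟨i, rfl⟩
    have h1 := (main_iff m r t' u' hind' (u' i)).mp ⟨i, rfl⟩
    obtain ⟨j, hj⟩ := (main_iff m r t u hind (u' i)).mpr (rhs_mono u' u hsyn' _ h1)
    exact ⟨j, hj.symm⟩
end

section
/- Let r ≤ m be nonnegative integers and let U, V ⊆ 𝔽₂^m be finite sets such that the degree-r evaluation vectors {u^r : u ∈ U} are linearly independent over 𝔽₂ and the degree-r evaluation vectors {v^r : v ∈ V} are linearly independent over 𝔽₂. If U and V have the same degree-(2r+1) syndrome, i.e. ∑_{u∈U} M(u) = ∑_{v∈V} M(v) in 𝔽₂ for every multilinear monomial M of degree at most 2r+1, then U = V. -/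
open MvPolynomial

lemma exists_dual_stmt6 {K V ι : Type*} [Field K] [AddCommGroup V] [Module K V]
    (v : ι → V) (hv : LinearIndependent K v) (i₀ : ι) [DecidableEq ι] :
    ∃ φ : V →ₗ[K] K, ∀ i, φ (v i) = if i = i₀ then 1 else 0 := by
  obtain ⟨π, hπ⟩ := (Submodule.span K (Set.range v)).subtype.exists_leftInverse_of_injective
    (Submodule.ker_subtype _)
  refine ⟨(Finsupp.lapply i₀).comp ((hv.repr : _ →ₗ[K] (ι →₀ K)).comp π), fun i => ?_⟩
  have hmem : v i ∈ Submodule.span K (Set.range v) :=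
    Submodule.subset_span (Set.mem_range_self i)
  have h1 : π (v i) = ⟨v i, hmem⟩ := by
    have := congrArg (fun f => f ⟨v i, hmem⟩) (congrArg DFunLike.coe hπ)
    simpa using this
  simp only [LinearMap.comp_apply, h1]
  rw [hv.repr_eq_single i ⟨v i, hmem⟩ rfl]
  simp [Finsupp.single_apply]

lemma prod_union_zmod2 (m : ℕ) (x : Fin m → ZMod 2) (S T : Finset (Fin m)) :
    (∏ i ∈ S, x i) * ∏ i ∈ T, x i = ∏ i ∈ S ∪ T, x i := by
  classical
  have h := Finset.prod_union_inter (s₁ := S) (s₂ := T) (f := x)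
  rw [← h, ← Finset.prod_sdiff (Finset.inter_subset_union (s := S) (t := T))]
  have hBB : (∏ i ∈ S ∩ T, x i) * ∏ i ∈ S ∩ T, x i = ∏ i ∈ S ∩ T, x i := by
    rw [← Finset.prod_mul_distrib]
    refine Finset.prod_congr rfl fun i _ => ?_
    have : ∀ a : ZMod 2, a * a = a := by decide
    exact this _
  rw [mul_assoc, hBB]

lemma key_stmt6 (m r : ℕ) (U V : Finset (Fin m → ZMod 2))
    (hsyn : ∀ S : Finset (Fin m), S.card ≤ 2 * r + 1 →
      (∑ x ∈ U, ∏ i ∈ S, x i) = ∑ x ∈ V, ∏ i ∈ S, x i)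
    (φ ψ : ({S : Finset (Fin m) // S.card ≤ r} → ZMod 2) →ₗ[ZMod 2] ZMod 2)
    (T : Finset (Fin m)) (hT : T.card ≤ 1) :
    ∑ x ∈ U, φ (evalVec m r x) * ψ (evalVec m r x) * ∏ i ∈ T, x i
      = ∑ x ∈ V, φ (evalVec m r x) * ψ (evalVec m r x) * ∏ i ∈ T, x i := by
  classical
  have expand : ∀ x : Fin m → ZMod 2,
      φ (evalVec m r x) * ψ (evalVec m r x) * ∏ i ∈ T, x i
        = ∑ S : {S : Finset (Fin m) // S.card ≤ r},
            ∑ S' : {S : Finset (Fin m) // S.card ≤ r},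
              φ (fun j => if S = j then (1:ZMod 2) else 0) *
                ψ (fun j => if S' = j then (1:ZMod 2) else 0) * ∏ i ∈ S.1 ∪ S'.1 ∪ T, x i := by
    intro x
    have hφ : φ (evalVec m r x)
        = ∑ S, evalVec m r x S * φ (fun j => if S = j then (1:ZMod 2) else 0) := by
      conv_lhs => rw [pi_eq_sum_univ (evalVec m r x)]
      rw [map_sum]
      refine Finset.sum_congr rfl fun S _ => ?_
      rw [map_smul, smul_eq_mul]
    have hψ : ψ (evalVec m r x)
        = ∑ S, evalVec m r x S * ψ (fun j => if S = j then (1:ZMod 2) else 0) := by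
      conv_lhs => rw [pi_eq_sum_univ (evalVec m r x)]
      rw [map_sum]
      refine Finset.sum_congr rfl fun S _ => ?_
      rw [map_smul, smul_eq_mul]
    rw [hφ, hψ, Finset.sum_mul_sum, Finset.sum_mul]
    refine Finset.sum_congr rfl fun S _ => ?_
    rw [Finset.sum_mul]
    refine Finset.sum_congr rfl fun S' _ => ?_
    show evalVec m r x S * φ (fun j => if S = j then (1:ZMod 2) else 0) *
        (evalVec m r x S' * ψ (fun j => if S' = j then (1:ZMod 2) else 0)) * ∏ i ∈ T, x i = _
    have : evalVec m r x S * evalVec m r x S' * ∏ i ∈ T, x i = ∏ i ∈ S.1 ∪ S'.1 ∪ T, x i := by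
      unfold evalVec
      rw [prod_union_zmod2, prod_union_zmod2]
    rw [← this]; ring
  simp only [expand]
  rw [Finset.sum_comm, Finset.sum_comm (s := V)]
  refine Finset.sum_congr rfl fun S _ => ?_
  rw [Finset.sum_comm, Finset.sum_comm (s := V)]
  refine Finset.sum_congr rfl fun S' _ => ?_
  rw [← Finset.mul_sum, ← Finset.mul_sum]
  congr 1
  apply hsyn
  calc (S.1 ∪ S'.1 ∪ T).card ≤ (S.1 ∪ S'.1).card + T.card := Finset.card_union_le _ _
    _ ≤ S.1.card + S'.1.card + T.card := by
        have := Finset.card_union_le S.1 S'.1; omega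
    _ ≤ r + r + 1 := by have := S.2; have := S'.2; omega
    _ = 2 * r + 1 := by omega

lemma subset_stmt6 (m r : ℕ)
    (U V : Finset (Fin m → ZMod 2))
    (hU : LinearIndependent (ZMod 2) (fun x : U => evalVec m r x.1))
    (hV : LinearIndependent (ZMod 2) (fun x : V => evalVec m r x.1))
    (hsyn : ∀ S : Finset (Fin m), S.card ≤ 2 * r + 1 →
      (∑ x ∈ U, ∏ i ∈ S, x i) = ∑ x ∈ V, ∏ i ∈ S, x i) :
    U ⊆ V := by
  classical
  intro w hw
  obtain ⟨φ, hφ⟩ := exists_dual_stmt6 _ hU ⟨w, hw⟩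
  have hφ' : ∀ u ∈ U, φ (evalVec m r u) = if u = w then 1 else 0 := by
    intro u hu
    have := hφ ⟨u, hu⟩
    simpa [Subtype.ext_iff] using this
  -- the coordinate functional at ∅, evaluating to the constant 1
  have hemp : (∅ : Finset (Fin m)).card ≤ r := by simp
  set ψ₀ : ({S : Finset (Fin m) // S.card ≤ r} → ZMod 2) →ₗ[ZMod 2] ZMod 2 :=
    LinearMap.proj ⟨∅, hemp⟩ with hψ₀def
  have hψ₀ : ∀ x : Fin m → ZMod 2, ψ₀ (evalVec m r x) = 1 := by
    intro x; simp [hψ₀def, evalVec]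
  -- first use: find v₀ ∈ V with φ (ev v₀) = 1
  have E0 := key_stmt6 m r U V hsyn φ ψ₀ ∅ (by simp)
  simp only [Finset.prod_empty, mul_one, hψ₀] at E0
  have hU1 : ∑ x ∈ U, φ (evalVec m r x) = 1 := by
    rw [Finset.sum_congr rfl hφ', Finset.sum_ite_eq' U w (fun _ => (1:ZMod 2))]
    simp [hw]
  rw [hU1] at E0
  have hne : (∑ x ∈ V, φ (evalVec m r x)) ≠ 0 := by rw [← E0]; decide
  obtain ⟨v₀, hv₀V, hv₀⟩ := Finset.exists_ne_zero_of_sum_ne_zero hne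
  have hφv₀ : φ (evalVec m r v₀) = 1 := by
    have : ∀ a : ZMod 2, a ≠ 0 → a = 1 := by decide
    exact this _ hv₀
  -- dual functional at v₀ on V
  obtain ⟨ψ, hψ⟩ := exists_dual_stmt6 _ hV ⟨v₀, hv₀V⟩
  have hψ' : ∀ v ∈ V, ψ (evalVec m r v) = if v = v₀ then 1 else 0 := by
    intro v hv
    have := hψ ⟨v, hv⟩
    simpa [Subtype.ext_iff] using this
  -- general computation of both sides of `key`
  have sumU : ∀ c : (Fin m → ZMod 2) → ZMod 2,
      ∑ x ∈ U, φ (evalVec m r x) * ψ (evalVec m r x) * c x = ψ (evalVec m r w) * c w := by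
    intro c
    rw [Finset.sum_eq_single_of_mem w hw]
    · rw [hφ' w hw]; simp
    · intro b hb hbw; rw [hφ' b hb, if_neg hbw]; ring
  have sumV : ∀ c : (Fin m → ZMod 2) → ZMod 2,
      ∑ x ∈ V, φ (evalVec m r x) * ψ (evalVec m r x) * c x = φ (evalVec m r v₀) * c v₀ := by
    intro c
    rw [Finset.sum_eq_single_of_mem v₀ hv₀V]
    · rw [hψ' v₀ hv₀V]; simp
    · intro b hb hbv; rw [hψ' b hb, if_neg hbv]; ring
  -- ψ (ev w) = 1
  have E1 := key_stmt6 m r U V hsyn φ ψ ∅ (by simp)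
  simp only [Finset.prod_empty] at E1
  rw [sumU (fun _ => 1), sumV (fun _ => 1), hφv₀, mul_one, mul_one] at E1
  -- w i = v₀ i for all i
  have hcoord : ∀ i : Fin m, w i = v₀ i := by
    intro i
    have E2 := key_stmt6 m r U V hsyn φ ψ {i} (by simp)
    simp only [Finset.prod_singleton] at E2
    rw [sumU (fun x => x i), sumV (fun x => x i), E1, hφv₀, one_mul, one_mul] at E2
    exact E2
  have : w = v₀ := funext hcoord
  rw [this]; exact hv₀V

theorem stmt6 (m r : ℕ) (hrm : r ≤ m)
    (U V : Finset (Fin m → ZMod 2))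
    (hU : LinearIndependent (ZMod 2) (fun x : U => evalVec m r x.1))
    (hV : LinearIndependent (ZMod 2) (fun x : V => evalVec m r x.1))
    (hsyn : ∀ S : Finset (Fin m), S.card ≤ 2 * r + 1 →
      (∑ x ∈ U, ∏ i ∈ S, x i) = ∑ x ∈ V, ∏ i ∈ S, x i) :
    U = V := by
  refine Finset.Subset.antisymm (subset_stmt6 m r U V hU hV hsyn)
    (subset_stmt6 m r V U hV hU fun S hS => (hsyn S hS).symm)
end

section
/- Let r, m be nonnegative integers with 2r + 2 ≤ m. Let c, c' ∈ RM(m, m−2r−2) be codewords, and let U, V ⊆ 𝔽₂^m be sets such that the degree-r evaluation vectors {u^r : u ∈ U} are linearly independent over 𝔽₂ and likewise {v^r : v ∈ V} are linearly independent over 𝔽₂. If c + 1_U = c' + 1_V in 𝔽₂^{2^m}, where 1_U and 1_V denote the characteristic vectors of U and V, then c = c' and U = V. In particular, any error pattern whose degree-r evaluation vectors are linearly independent is uniquely correctable in RM(m, m−2r−2). -/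
open MvPolynomial

/-- The Reed–Muller code `RM(m, r)`: evaluation vectors of multilinear polynomials of
total degree at most `r`. -/
def RM (m r : ℕ) : Set ((Fin m → ZMod 2) → ZMod 2) :=
  { w | ∃ f : MvPolynomial (Fin m) (ZMod 2),
      IsMultilinear f ∧ f.totalDegree ≤ r ∧ ∀ v, w v = eval v f }

open Classical in
/-- The characteristic vector of a set `U ⊆ 𝔽₂^m`. -/
noncomputable def chi {m : ℕ} (U : Set (Fin m → ZMod 2)) : (Fin m → ZMod 2) → ZMod 2 :=
  fun v => if v ∈ U then 1 else 0

/-!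
Since `1_U - 1_V = c' - c` lies in `RM(m, m - 2r - 2)` and a polynomial of degree `< m` sums
to zero over `𝔽₂^m`, the sets `U` and `V` have the same sum of every polynomial of degree
`≤ 2r + 1`. Independence of the `u^r` makes every function on `U` the restriction of a
polynomial of degree `≤ r`. If `u ∈ U \ V`, let `f` be such a polynomial equal to the indicator
of `u` on `U`: its sum over `V` is `1`, so `f v ≠ 0` for some `v ∈ V`. With `h` the indicator
of `v` on `V` and a linear form `ℓ` vanishing at `u` but not at `v`, the polynomial `f h ℓ` has
degree `≤ 2r + 1` and sums to `0` over `U` but not over `V`.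
-/

open Classical in
lemma sum_chi_mul_eq_sum_toFinset {m : ℕ} (U : Set (Fin m → ZMod 2))
    (x : (Fin m → ZMod 2) → ZMod 2) :
    ∑ v, chi U v * x v = ∑ v ∈ U.toFinset, x v := by
  simp [chi, ite_mul, ← Finset.sum_filter, Set.filter_mem_univ_eq_toFinset]

lemma sum_mul_eval_eq_zero_of_mem_RM {m k : ℕ} {c : (Fin m → ZMod 2) → ZMod 2}
    (hc : c ∈ RM m k) {g : MvPolynomial (Fin m) (ZMod 2)} (hg : k + g.totalDegree < m) :
    ∑ v, c v * eval v g = 0 := by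
  obtain ⟨p, -, hp_deg, hp⟩ := hc
  simp_rw [hp, ← eval_mul]
  apply sum_eval_eq_zero
  calc (p * g).totalDegree ≤ p.totalDegree + g.totalDegree := totalDegree_mul p g
    _ < (Fintype.card (ZMod 2) - 1) * Fintype.card (Fin m) := by
      simp only [ZMod.card, Nat.add_one_sub_one, Fintype.card_fin, one_mul]; omega

lemma sum_chi_mul_eval_eq_of_add_chi_eq {m k : ℕ} {c c' : (Fin m → ZMod 2) → ZMod 2}
    (hc : c ∈ RM m k) (hc' : c' ∈ RM m k) {U V : Set (Fin m → ZMod 2)}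
    (heq : c + chi U = c' + chi V) {g : MvPolynomial (Fin m) (ZMod 2)}
    (hg : k + g.totalDegree < m) :
    ∑ v, chi U v * eval v g = ∑ v, chi V v * eval v g := by
  have hdiff : chi U - chi V = c' - c := by rw [sub_eq_sub_iff_add_eq_add, add_comm, heq]
  rw [← sub_eq_zero, ← Finset.sum_sub_distrib]
  simp_rw [← sub_mul, ← Pi.sub_apply, hdiff, Pi.sub_apply, sub_mul, Finset.sum_sub_distrib,
    sum_mul_eval_eq_zero_of_mem_RM hc hg, sum_mul_eval_eq_zero_of_mem_RM hc' hg, sub_zero]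

lemma exists_totalDegree_le_eval_eq_apply_evalVec {m r : ℕ}
    (φ : ({S : Finset (Fin m) // S.card ≤ r} → ZMod 2) →ₗ[ZMod 2] ZMod 2) :
    ∃ f : MvPolynomial (Fin m) (ZMod 2), f.totalDegree ≤ r ∧
      ∀ u, eval u f = φ (evalVec m r u) := by
  classical
  refine ⟨∑ S, C (φ fun T => if S = T then 1 else 0) * ∏ i ∈ S.1, X i, ?_, fun u => ?_⟩
  · refine (totalDegree_finsetSum _ _).trans (Finset.sup_le fun S _ => ?_)
    calc _ ≤ 0 + ∑ i ∈ S.1, (X i : MvPolynomial (Fin m) (ZMod 2)).totalDegree :=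
          (totalDegree_mul _ _).trans
            (add_le_add (totalDegree_C _).le (totalDegree_finsetProd _ _))
      _ ≤ r := by simpa [totalDegree_X] using S.2
  · simp [LinearMap.pi_apply_eq_sum_univ φ (evalVec m r u), evalVec, mul_comm]

lemma exists_totalDegree_le_eval_eq {m r : ℕ} {W : Set (Fin m → ZMod 2)}
    (hW : LinearIndependent (ZMod 2) (fun u : W => evalVec m r u.1))
    (t : (Fin m → ZMod 2) → ZMod 2) :
    ∃ f : MvPolynomial (Fin m) (ZMod 2), f.totalDegree ≤ r ∧ ∀ u ∈ W, eval u f = t u := by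
  obtain ⟨φ, hφ⟩ := LinearMap.exists_extend
    (Finsupp.linearCombination (ZMod 2) (fun u : W => t u) ∘ₗ hW.repr)
  obtain ⟨f, hf_deg, hf⟩ := exists_totalDegree_le_eval_eq_apply_evalVec φ
  refine ⟨f, hf_deg, fun u hu => ?_⟩
  have := LinearMap.congr_fun hφ ⟨evalVec m r u, Submodule.subset_span ⟨⟨u, hu⟩, rfl⟩⟩
  simpa [hf, hW.repr_eq_single ⟨u, hu⟩] using this

lemma subset_of_sum_chi_mul_eval_eq {m r : ℕ} {U V : Set (Fin m → ZMod 2)}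
    (hU : LinearIndependent (ZMod 2) (fun u : U => evalVec m r u.1))
    (hV : LinearIndependent (ZMod 2) (fun v : V => evalVec m r v.1))
    (hsum : ∀ g : MvPolynomial (Fin m) (ZMod 2), g.totalDegree ≤ 2 * r + 1 →
      ∑ v, chi U v * eval v g = ∑ v, chi V v * eval v g) :
    U ⊆ V := by
  classical
  simp only [sum_chi_mul_eq_sum_toFinset] at hsum
  intro u hu
  by_contra huV
  obtain ⟨f, hf_deg, hf⟩ := exists_totalDegree_le_eval_eq hU (Pi.single u 1)
  have hfU : ∑ w ∈ U.toFinset, eval w f = 1 := by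
    rw [Finset.sum_eq_single u (fun w hw hwu => by simp_all) (by simp [hu]), hf u hu]
    simp
  obtain ⟨v, hv, hfv⟩ : ∃ v ∈ V.toFinset, eval v f ≠ 0 :=
    Finset.exists_ne_zero_of_sum_ne_zero (by rw [← hsum f (by omega), hfU]; exact one_ne_zero)
  rw [Set.mem_toFinset] at hv
  obtain ⟨h, hh_deg, hh⟩ := exists_totalDegree_le_eval_eq hV (Pi.single v 1)
  obtain ⟨j, hj⟩ : ∃ j, v j ≠ u j := Function.ne_iff.1 (ne_of_mem_of_not_mem hv huV)
  set g := f * h * (X j - C (u j))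
  have hg_deg : g.totalDegree ≤ 2 * r + 1 := by
    have hℓ : (X j - C (u j) : MvPolynomial (Fin m) (ZMod 2)).totalDegree ≤ 1 :=
      (totalDegree_sub _ _).trans (by simp [totalDegree_X, totalDegree_C])
    calc g.totalDegree ≤ (f * h).totalDegree + 1 := (totalDegree_mul _ _).trans (by gcongr)
      _ ≤ f.totalDegree + h.totalDegree + 1 := by gcongr; exact totalDegree_mul _ _
      _ ≤ 2 * r + 1 := by omega
  have hgU : ∑ w ∈ U.toFinset, eval w g = 0 := Finset.sum_eq_zero fun w hw => by
    rw [Set.mem_toFinset] at hw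
    by_cases hwu : w = u
    · simp [g, hwu]
    · simp [g, hf w hw, hwu]
  have hgV : ∑ w ∈ V.toFinset, eval w g ≠ 0 := by
    rw [Finset.sum_eq_single v (fun w hw hwv => by simp_all [g]) (by simp [hv])]
    simp [g, hh v hv, hfv, sub_ne_zero.2 hj]
  exact hgV (by rw [← hsum g hg_deg, hgU])

theorem stmt7 (m r : ℕ) (hrm : 2 * r + 2 ≤ m)
    (c c' : (Fin m → ZMod 2) → ZMod 2)
    (hc : c ∈ RM m (m - (2 * r + 2))) (hc' : c' ∈ RM m (m - (2 * r + 2)))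
    (U V : Set (Fin m → ZMod 2))
    (hU : LinearIndependent (ZMod 2) (fun x : U => evalVec m r x.1))
    (hV : LinearIndependent (ZMod 2) (fun x : V => evalVec m r x.1))
    (heq : c + chi U = c' + chi V) :
    c = c' ∧ U = V := by
  have hsum : ∀ g : MvPolynomial (Fin m) (ZMod 2), g.totalDegree ≤ 2 * r + 1 →
      ∑ v, chi U v * eval v g = ∑ v, chi V v * eval v g := fun g hg =>
    sum_chi_mul_eval_eq_of_add_chi_eq hc hc' heq (by omega)
  have hUV : U = V := (subset_of_sum_chi_mul_eval_eq hU hV hsum).antisymm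
    (subset_of_sum_chi_mul_eval_eq hV hU fun g hg => (hsum g hg).symm)
  subst hUV
  exact ⟨add_right_cancel heq, rfl⟩
end

section
/- Let q be a prime power, n ≥ 1, and let E, C, N ⊆ 𝔽_q^n be linear codes satisfying: (i) E*C ⊆ N; and (ii) for every set of coordinates U ⊆ [n] that is correctable from erasures in N and every coordinate i ∉ U, there exists a codeword e ∈ E with e_j = 0 for all j ∈ U and e_i = 1. Then for every set U ⊆ [n] that is correctable from erasures in N, the following unique decoding holds in C: if c, c' ∈ C and e, e' ∈ 𝔽_q^n are vectors supported on U with c + e = c' + e', then c = c' and e = e'. -/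
/-- A set of coordinates `U` is correctable from erasures in the linear code `N` if the
only codeword of `N` whose support is contained in `U` is the zero codeword. -/
def CorrectableFromErasures {F : Type*} [Field F] {n : ℕ}
    (N : Submodule F (Fin n → F)) (U : Set (Fin n)) : Prop :=
  ∀ w ∈ N, (∀ i, i ∉ U → w i = 0) → w = 0

theorem stmt9 (F : Type*) [Field F] [Fintype F] (n : ℕ) (hn : 1 ≤ n)
    (E C N : Submodule F (Fin n → F))
    -- (i) E * C ⊆ N
    (hmul : ∀ a ∈ E, ∀ c ∈ C, (fun i => a i * c i) ∈ N)
    -- (ii) error-locating property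
    (hloc : ∀ U : Set (Fin n), CorrectableFromErasures N U → ∀ i ∉ U,
      ∃ a ∈ E, (∀ j ∈ U, a j = 0) ∧ a i = 1)
    (U : Set (Fin n)) (hU : CorrectableFromErasures N U)
    (c c' : Fin n → F) (hc : c ∈ C) (hc' : c' ∈ C)
    (e e' : Fin n → F)
    (he : ∀ i, i ∉ U → e i = 0) (he' : ∀ i, i ∉ U → e' i = 0)
    (heq : c + e = c' + e') :
    c = c' ∧ e = e' := by
  have hd : ∀ i, c i - c' i = e' i - e i := by
    intro i
    have := congrFun heq i
    simp only [Pi.add_apply] at this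
    linear_combination this
  have hdU : ∀ i, i ∉ U → c i - c' i = 0 := by
    intro i hi
    rw [hd i, he i hi, he' i hi, sub_zero]
  have key : ∀ i, c i - c' i = 0 := by
    intro i
    by_cases hi : i ∈ U
    · have hU' : CorrectableFromErasures N (U \ {i}) := by
        intro w hw h0
        exact hU w hw fun j hj => h0 j (fun h => hj h.1)
      obtain ⟨a, haE, haU, hai⟩ := hloc (U \ {i}) hU' i (by simp)
      have hwN : (fun j => a j * (c j - c' j)) ∈ N := by
        have h1 := hmul a haE c hc
        have h2 := hmul a haE c' hc'
        have h3 := N.sub_mem h1 h2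
        convert h3 using 1
        funext j
        simp [mul_sub]
      have hw0 : (fun j => a j * (c j - c' j)) = 0 := by
        apply hU _ hwN
        intro j hj
        rw [hdU j hj, mul_zero]
      have := congrFun hw0 i
      simpa [hai] using this
    · exact hdU i hi
  have hcc : c = c' := funext fun i => sub_eq_zero.mp (key i)
  refine ⟨hcc, funext fun i => ?_⟩
  have h := hd i
  rw [key i] at h
  exact (sub_eq_zero.mp h.symm).symm
end

section
/- Let q be a prime power, n ≥ 1, and let E, C, N ⊆ 𝔽_q^n be linear codes satisfying: (i) E*C ⊆ N; and (ii) for every set of coordinates U ⊆ [n] that is correctable from erasures in N and every coordinate i ∉ U, there exists a codeword a ∈ E with a_j = 0 for all j ∈ U and a_i = 1. Let U ⊆ [n] be correctable from erasures in N, let c ∈ C, and let e ∈ 𝔽_q^n be a vector whose support is exactly U, and set y = c + e. Then { i ∈ [n] : a_i = 0 for every a ∈ E such that a*y ∈ N } = U. That is, the common zeros of the solution space { a ∈ E : a*y ∈ N } are exactly the error locations. -/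
theorem stmt10 (F : Type*) [Field F] [Fintype F] (n : ℕ) (hn : 1 ≤ n)
    (E C N : Submodule F (Fin n → F))
    -- (i) E * C ⊆ N
    (hmul : ∀ a ∈ E, ∀ c ∈ C, (fun i => a i * c i) ∈ N)
    -- (ii) error-locating property
    (hloc : ∀ U : Set (Fin n), CorrectableFromErasures N U → ∀ i ∉ U,
      ∃ a ∈ E, (∀ j ∈ U, a j = 0) ∧ a i = 1)
    (U : Set (Fin n)) (hU : CorrectableFromErasures N U)
    (c : Fin n → F) (hc : c ∈ C)
    (e : Fin n → F) (he : ∀ i, e i ≠ 0 ↔ i ∈ U)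
    (y : Fin n → F) (hy : y = c + e) :
    { i : Fin n | ∀ a ∈ E, (fun j => a j * y j) ∈ N → a i = 0 } = U := by
  ext i
  simp only [Set.mem_setOf_eq]
  constructor
  · intro h
    by_contra hiU
    obtain ⟨a, haE, haU, hai⟩ := hloc U hU i hiU
    have hay : (fun j => a j * y j) ∈ N := by
      have heq : (fun j => a j * y j) = fun j => a j * c j := by
        funext j
        subst hy
        by_cases hj : j ∈ U
        · simp [haU j hj]
        · have : e j = 0 := by
            by_contra hne
            exact hj ((he j).mp hne)
          simp [Pi.add_apply, this]
      rw [heq]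
      exact hmul a haE c hc
    have := h a haE hay
    rw [hai] at this
    exact one_ne_zero this
  · intro hiU a haE hay
    have hace : (fun j => a j * e j) ∈ N := by
      have : (fun j => a j * e j) = (fun j => a j * y j) - (fun j => a j * c j) := by
        funext j; subst hy; simp [Pi.add_apply]; ring
      rw [this]
      exact N.sub_mem hay (hmul a haE c hc)
    have hz : (fun j => a j * e j) = 0 := by
      apply hU _ hace
      intro j hj
      have : e j = 0 := by
        by_contra hne
        exact hj ((he j).mp hne)
      simp [this]
    have := congrFun hz i
    simp only [Pi.zero_apply] at this
    have hei : e i ≠ 0 := (he i).mpr hiU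
    exact (mul_eq_zero.mp this).resolve_right hei
end

section
/- Let q be a prime power, n ≥ 1, and let E, C, N ⊆ 𝔽_q^n be linear codes with E*C ⊆ N. Let U ⊆ [n] be a set of coordinates correctable from erasures in N, let c ∈ C, let e ∈ 𝔽_q^n be supported on U, and set y = c + e. Then for every a ∈ E and b ∈ N with a*y = b, it holds that a*e = 0; in particular a_i = 0 for every i in the support of e. -/
theorem stmt11 (F : Type*) [Field F] [Fintype F] (n : ℕ) (hn : 1 ≤ n)
    (E C N : Submodule F (Fin n → F))
    -- E * C ⊆ N
    (hmul : ∀ a ∈ E, ∀ c ∈ C, (fun i => a i * c i) ∈ N)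
    (U : Set (Fin n)) (hU : CorrectableFromErasures N U)
    (c : Fin n → F) (hc : c ∈ C)
    (e : Fin n → F) (he : ∀ i, i ∉ U → e i = 0)
    (y : Fin n → F) (hy : y = c + e) :
    ∀ a ∈ E, ∀ b ∈ N, (fun i => a i * y i) = b →
      ((fun i => a i * e i) = 0 ∧ ∀ i, e i ≠ 0 → a i = 0) := by
  intro a ha b hb hab
  have hac : (fun i => a i * c i) ∈ N := hmul a ha c hc
  have hmem : (fun i => a i * e i) ∈ N := by
    have : (fun i => a i * e i) = (fun i => a i * y i) - (fun i => a i * c i) := by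
      funext i; simp [hy, mul_add]
    rw [this, hab]
    exact N.sub_mem hb hac
  have hzero : (fun i => a i * e i) = 0 := by
    apply hU _ hmem
    intro i hi
    simp [he i hi]
  refine ⟨hzero, fun i hei => ?_⟩
  have : a i * e i = 0 := congrFun hzero i
  rcases mul_eq_zero.mp this with h | h
  · exact h
  · exact absurd h hei
end

section
/- Let q be a prime power, n ≥ 1, and let E, C, N ⊆ 𝔽_q^n be linear codes satisfying: (i) E*C ⊆ N; and (ii) for every set of coordinates U ⊆ [n] that is correctable from erasures in N and every coordinate i ∉ U, there exists a codeword a ∈ E with a_j = 0 for all j ∈ U and a_i = 1. Then every set U ⊆ [n] that is correctable from erasures in N is also correctable from erasures in C. -/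
theorem stmt13 (F : Type*) [Field F] [Fintype F] (n : ℕ) (hn : 1 ≤ n)
    (E C N : Submodule F (Fin n → F))
    -- (i) E * C ⊆ N
    (hmul : ∀ a ∈ E, ∀ c ∈ C, (fun i => a i * c i) ∈ N)
    -- (ii) error-locating property
    (hloc : ∀ U : Set (Fin n), CorrectableFromErasures N U → ∀ i ∉ U,
      ∃ a ∈ E, (∀ j ∈ U, a j = 0) ∧ a i = 1) :
    ∀ U : Set (Fin n), CorrectableFromErasures N U → CorrectableFromErasures C U := by
  intro U hU c hc hczero
  funext i
  show c i = 0
  by_cases hiU : i ∈ U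
  · -- U \ {i} is correctable in N since U is
    have hU' : CorrectableFromErasures N (U \ {i}) := by
      intro w hw hwz
      exact hU w hw (fun j hj => hwz j (fun hj' => hj hj'.1))
    have hiU' : i ∉ U \ {i} := fun h => h.2 rfl
    obtain ⟨a, haE, haz, hai⟩ := hloc (U \ {i}) hU' i hiU'
    have hacN := hmul a haE c hc
    have hzero : (fun j => a j * c j) = 0 := by
      apply hU _ hacN
      intro j hj
      simp [hczero j hj]
    have := congrFun hzero i
    simpa [hai] using this
  · exact hczero i hiU
end

section
/- Let r ≤ m be nonnegative integers, let u_1, …, u_t ∈ 𝔽₂^m be distinct points such that the degree-r evaluation vectors u_1^r, …, u_t^r are linearly independent over 𝔽₂, and let v ∈ 𝔽₂^m with v ∉ {u_1,…,u_t}. Then there exists a multilinear polynomial g ∈ 𝔽₂[x_1,…,x_m] of total degree at most r + 1 such that g(u_j) = 0 for every j ∈ [t] and g(v) = 1. -/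
open MvPolynomial

/-!
Let `W` be the span of the vectors `u_j^{r+1}`. If `v^{r+1} = ∑ c_j u_j^{r+1}`, then
for every coordinate `i` and every `|S| ≤ r`, comparing the coordinates `S ∪ {i}` and `S` gives
`∑ c_j (u_j(i) + v(i)) u_j^S = 0`; independence of the `u_j^r` forces `c_j (u_j(i) + v(i)) = 0`,
and since `∑ c_j = 1` (coordinate `∅`) some `c_j = 1`, whence `v = u_j`. So `v^{r+1} ∉ W`, and a
linear functional `φ` vanishing on `W` with `φ(v^{r+1}) = 1` is, in the monomial basis, the
coefficient vector of the required polynomial `g`.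
-/

lemma Finset.prod_insert_of_isIdempotentElem {α M : Type*} [CommMonoid M] [DecidableEq α]
    {f : α → M} {i : α} (hi : IsIdempotentElem (f i)) (S : Finset α) :
    ∏ k ∈ insert i S, f k = f i * ∏ k ∈ S, f k := by
  by_cases h : i ∈ S
  · rw [Finset.insert_eq_self.mpr h, ← Finset.mul_prod_erase S f h, ← mul_assoc, hi.eq]
  · exact Finset.prod_insert h

lemma ZMod.isIdempotentElem_two (x : ZMod 2) : IsIdempotentElem x := by
  fin_cases x <;> rfl

lemma ZMod.eq_one_of_ne_zero_two {x : ZMod 2} (hx : x ≠ 0) : x = 1 := by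
  revert x; decide

namespace MvPolynomial

variable {σ R : Type*} [CommSemiring R] [DecidableEq σ]

lemma monomial_toFinsupp_mem_restrictDegree (S : Finset σ) (a : R) :
    monomial S.val.toFinsupp a ∈ restrictDegree σ R 1 := by
  rw [mem_restrictDegree]
  intro s hs i
  rw [Finset.mem_singleton.mp (support_monomial_subset hs), Multiset.toFinsupp_apply]
  exact Multiset.nodup_iff_count_le_one.mp S.nodup i

lemma totalDegree_monomial_toFinsupp_le (S : Finset σ) (a : R) :
    (monomial S.val.toFinsupp a).totalDegree ≤ S.card :=
  (totalDegree_monomial_le _ _).trans (Multiset.toFinsupp_sum_eq _).le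

lemma eval_monomial_toFinsupp (S : Finset σ) (a : R) (w : σ → R) :
    eval w (monomial S.val.toFinsupp a) = a * ∏ i ∈ S, w i := by
  rw [eval_monomial, Finsupp.prod, Multiset.toFinsupp_support, Finset.val_toFinset]
  refine congrArg (a * ·) (Finset.prod_congr rfl fun i hi => ?_)
  rw [Multiset.toFinsupp_apply, Multiset.count_eq_one_of_mem S.nodup hi, pow_one]

end MvPolynomial

theorem exists_isMultilinear_eval_eq_apply_evalVec (m d : ℕ)
    (φ : ({S : Finset (Fin m) // S.card ≤ d} → ZMod 2) →ₗ[ZMod 2] ZMod 2) :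
    ∃ g : MvPolynomial (Fin m) (ZMod 2), IsMultilinear g ∧ g.totalDegree ≤ d ∧
      ∀ w, eval w g = φ (evalVec m d w) := by
  classical
  refine ⟨∑ S, monomial S.1.val.toFinsupp (φ fun T => if S = T then 1 else 0), ?_, ?_, ?_⟩
  · exact (mem_restrictDegree _ _ _).mp
      (Submodule.sum_mem _ fun S _ => monomial_toFinsupp_mem_restrictDegree _ _)
  · exact (totalDegree_finsetSum _ _).trans <| Finset.sup_le fun S _ =>
      (totalDegree_monomial_toFinsupp_le _ _).trans S.2
  · intro w
    simp only [φ.pi_apply_eq_sum_univ (evalVec m d w), map_sum, eval_monomial_toFinsupp, evalVec,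
      smul_eq_mul, mul_comm]

section SpanOfEvalVec

variable {ι : Type*} [Fintype ι] {m r : ℕ} {u : ι → Fin m → ZMod 2} {v : Fin m → ZMod 2}
  {c : ι → ZMod 2}

lemma sum_smul_evalVec_eq_zero_of_sum_smul_evalVec_succ_eq
    (hc : ∑ j, c j • evalVec m (r + 1) (u j) = evalVec m (r + 1) v) (i : Fin m) :
    ∑ j, (c j * (u j i + v i)) • evalVec m r (u j) = 0 := by
  classical
  have hcoord (S : Finset (Fin m)) (hS : S.card ≤ r + 1) :
      ∑ j, c j * ∏ k ∈ S, u j k = ∏ k ∈ S, v k := by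
    simpa [evalVec, Finset.sum_apply] using congrFun hc ⟨S, hS⟩
  funext ⟨S, hS⟩
  have hS' : (insert i S).card ≤ r + 1 := (Finset.card_insert_le i S).trans (by omega)
  have hinsert := hcoord (insert i S) hS'
  simp only [Finset.prod_insert_of_isIdempotentElem (ZMod.isIdempotentElem_two _)] at hinsert
  -- the coordinate `insert i S` of both sides equals `v i` times their coordinate `S`
  calc (∑ j, (c j * (u j i + v i)) • evalVec m r (u j)) ⟨S, hS⟩
      = ∑ j, c j * (u j i * ∏ k ∈ S, u j k) + v i * ∑ j, c j * ∏ k ∈ S, u j k := by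
        simp only [Finset.sum_apply, Pi.smul_apply, evalVec, smul_eq_mul, Finset.mul_sum, ← Finset.sum_add_distrib]
        exact Finset.sum_congr rfl fun j _ => by ring
    _ = 0 := by rw [hinsert, hcoord S (by omega), CharTwo.add_self_eq_zero]

theorem exists_eq_of_evalVec_succ_mem_span
    (hind : LinearIndependent (ZMod 2) fun j => evalVec m r (u j))
    (hv : evalVec m (r + 1) v ∈
      Submodule.span (ZMod 2) (Set.range fun j => evalVec m (r + 1) (u j))) :
    ∃ j, v = u j := by
  obtain ⟨c, hc⟩ := (Submodule.mem_span_range_iff_exists_fun _).mp hv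
  have hsum : ∑ j, c j = 1 := by
    simpa [evalVec, Finset.sum_apply] using congrFun hc ⟨∅, Nat.zero_le _⟩
  obtain ⟨j, hj⟩ : ∃ j, c j ≠ 0 := by
    by_contra! h
    simp [h] at hsum
  refine ⟨j, funext fun i => ?_⟩
  have hdep := Fintype.linearIndependent_iff.mp hind _
    (sum_smul_evalVec_eq_zero_of_sum_smul_evalVec_succ_eq hc i) j
  rw [ZMod.eq_one_of_ne_zero_two hj, one_mul, add_eq_zero_iff_eq_neg, ZMod.neg_eq_self_mod_two] at hdep
  exact hdep.symm

end SpanOfEvalVec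

theorem stmt14_general (m r t : ℕ)
    (u : Fin t → (Fin m → ZMod 2))
    (hind : LinearIndependent (ZMod 2) (fun j => evalVec m r (u j)))
    (v : Fin m → ZMod 2) (hv : ∀ i : Fin t, v ≠ u i) :
    ∃ g : MvPolynomial (Fin m) (ZMod 2),
      IsMultilinear g ∧ g.totalDegree ≤ r + 1 ∧
      (∀ j : Fin t, eval (u j) g = 0) ∧ eval v g = 1 := by
  set W := Submodule.span (ZMod 2) (Set.range fun j => evalVec m (r + 1) (u j))
  have hvW : evalVec m (r + 1) v ∉ W := fun h => by
    obtain ⟨j, rfl⟩ := exists_eq_of_evalVec_succ_mem_span hind h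
    exact hv j rfl
  obtain ⟨φ, hφv, hφW⟩ := Submodule.exists_dual_map_eq_bot_of_notMem hvW inferInstance
  obtain ⟨g, hg, hdeg, heval⟩ := exists_isMultilinear_eval_eq_apply_evalVec m (r + 1) φ
  refine ⟨g, hg, hdeg, fun j => ?_, ?_⟩
  · rw [heval, ← Submodule.mem_bot (ZMod 2), ← hφW]
    exact Submodule.mem_map_of_mem (Submodule.subset_span ⟨j, rfl⟩)
  · rw [heval, ZMod.eq_one_of_ne_zero_two hφv]

theorem stmt14 (m r t : ℕ) (hrm : r ≤ m)
    (u : Fin t → (Fin m → ZMod 2)) (hinj : Function.Injective u)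
    (hind : LinearIndependent (ZMod 2) (fun j => evalVec m r (u j)))
    (v : Fin m → ZMod 2) (hv : ∀ i : Fin t, v ≠ u i) :
    ∃ g : MvPolynomial (Fin m) (ZMod 2),
      IsMultilinear g ∧ g.totalDegree ≤ r + 1 ∧
      (∀ j : Fin t, eval (u j) g = 0) ∧ eval v g = 1 :=
  stmt14_general m r t u hind v hv
end
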